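/- Suppose x, y in (0,1), and normalized confusion matrices for two groups satisfy equal opportunity (TPa·(1-y) = TPb·(1-x)), false positive parity (FPa·y = FPb·x), and overall accuracy equality (TPa+TNa = TPb+TNb), with x ≠ y. Then TPb·y = (1-y)·TNb. -/
import Mathlib

theorem stmt
    (x y TPa FNa TNa FPa TPb FNb TNb FPb : ℝ)
    (hx0 : 0 < x) (hx1 : x < 1) (hy0 : 0 < y) (hy1 : y < 1)
    (hTPa : 0 ≤ TPa) (hFNa : 0 ≤ FNa) (hTNa : 0 ≤ TNa) (hFPa : 0 ≤ FPa)
    (hTPb : 0 ≤ TPb) (hFNb : 0 ≤ FNb) (hTNb : 0 ≤ TNb) (hFPb : 0 ≤ FPb)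
    (hra : TPa + FNa = 1 - x) (hra' : TNa + FPa = x)
    (hrb : TPb + FNb = 1 - y) (hrb' : TNb + FPb = y)
    (heo : TPa * (1 - y) = TPb * (1 - x))
    (hfpp : FPa * y = FPb * x)
    (hoae : TPa + TNa = TPb + TNb)
    (hxy : x ≠ y)
    : TPb * y = (1 - y) * TNb := by
  have key : (y - x) * (TPb * y - (1 - y) * TNb) = 0 := by
    linear_combination (y*(1-y))*hoae - y*heo + (1-y)*hfpp - (y*(1-y))*hra' + ((1-y)*x)*hrb'
  rcases mul_eq_zero.mp key with h | h
  · exact absurd (sub_eq_zero.mp h).symm hxy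
  · linarith [sub_eq_zero.mp h]
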